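/- arXiv:1504.05482 — 7 statements merged into one kernel-verified Lean document; each statement's English description precedes it below -/
import Mathlib

section
/- For any positive integers m, n and nonnegative integers a_1, ..., a_m, the polynomial ([a_1+⋯+a_m+1]_q! / ([a_1]_q! ⋯ [a_m]_q!)) · ∑_{h=0}^{n-1} q^h ∏_{i=1}^m [h choose a_i]_q is divisible by [n]_q = 1 + q + ⋯ + q^{n-1} in the ring ℤ[q]. -/
open Polynomial Finset

/-- The q-integer `[n]_q = 1 + q + ⋯ + q^{n-1}` as a polynomial in `ℤ[q]`. -/
noncomputable def qint (n : ℕ) : Polynomial ℤ := ∑ i ∈ Finset.range n, X ^ i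

/-- The q-factorial `[n]_q! = [n]_q [n-1]_q ⋯ [1]_q`. -/
noncomputable def qfact : ℕ → Polynomial ℤ
  | 0 => 1
  | n + 1 => qint (n + 1) * qfact n

/-- The Gaussian (q-)binomial coefficient `[n choose k]_q` as a polynomial in `ℤ[q]`,
defined by the q-Pascal recurrence; it equals `∏_{i=1}^k (1-q^{n-i+1})/(1-q^i)` for
`0 ≤ k ≤ n` and `0` otherwise. -/
noncomputable def qbinom : ℕ → ℕ → Polynomial ℤ
  | _, 0 => 1
  | 0, _ + 1 => 0
  | n + 1, k + 1 => qbinom n k + X ^ (k + 1) * qbinom n (k + 1)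

/-!
Induction on the number of parts. For one part `a`, the q-hockey-stick identity
`∑_{h<n} q^h [h choose a] = q^a [n choose a+1]` and the absorption identity
`[a+1] [n choose a+1] = [n] [n-1 choose a]` exhibit the quotient explicitly.
For parts `a, b, a₃, …` the q-Vandermonde convolution gives
`[h choose a] [h choose b] = ∑_k q^((a-k)(b-k)) [a choose k] [a+b-k choose a] [h choose a+b-k]`,
which merges `a, b` into the single part `c = a+b-k`. With `s = a₃ + ⋯`, the new coefficient
`[a+b+s+1]! [a choose k] [c choose a] / ([a]! [b]!)` equals
`[a+b+s+1 choose k] [c choose a] [c choose b] · [c+s+1]! / [c]!`, a polynomial multiple of the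
prefactor of the merged tuple, so the induction hypothesis applies to every term.

Every identity between q-binomials is checked after multiplying by nonzero q-factorials, using
`[p+q choose p] [p]! [q]! = [p+q]!`.
-/

theorem qint_add (p q : ℕ) : qint (p + q) = qint p + X ^ p * qint q := by
  simp only [qint, mul_sum, ← pow_add, sum_range_add]

theorem qint_ne_zero {n : ℕ} (hn : n ≠ 0) : qint n ≠ 0 := fun h ↦ hn <| by
  have : (qint n).eval 1 = n := by simp [qint, eval_finsetSum]
  rw [h, eval_zero] at this
  exact_mod_cast this.symm

theorem qfact_succ (n : ℕ) : qfact (n + 1) = qint (n + 1) * qfact n := rfl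

theorem qfact_ne_zero (n : ℕ) : qfact n ≠ 0 := by
  induction n with
  | zero => simp [qfact]
  | succ n ih => exact mul_ne_zero (qint_ne_zero n.succ_ne_zero) ih

theorem qbinom_zero_right (n : ℕ) : qbinom n 0 = 1 := by cases n <;> rfl

theorem qbinom_zero_succ (k : ℕ) : qbinom 0 (k + 1) = 0 := rfl

theorem qbinom_succ_succ (n k : ℕ) :
    qbinom (n + 1) (k + 1) = qbinom n k + X ^ (k + 1) * qbinom n (k + 1) := rfl

theorem qbinom_eq_zero_of_lt {n k : ℕ} (h : n < k) : qbinom n k = 0 := by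
  induction n generalizing k with
  | zero => obtain ⟨k, rfl⟩ := Nat.exists_eq_succ_of_ne_zero h.ne'; rfl
  | succ n ih =>
    obtain ⟨k, rfl⟩ := Nat.exists_eq_succ_of_ne_zero (by omega : k ≠ 0)
    rw [qbinom_succ_succ, ih (by omega), ih (by omega), mul_zero, add_zero]

theorem qbinom_self (n : ℕ) : qbinom n n = 1 := by
  induction n with
  | zero => rfl
  | succ n ih => rw [qbinom_succ_succ, ih, qbinom_eq_zero_of_lt n.lt_succ_self, mul_zero, add_zero]

theorem qbinom_add_mul_qfact_mul_qfact : ∀ p q : ℕ,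
    qbinom (p + q) p * (qfact p * qfact q) = qfact (p + q)
  | 0, q => by simp [qbinom_zero_right, qfact]
  | p + 1, 0 => by simp [qbinom_self, qfact]
  | p + 1, q + 1 => by
    have h₁ := qbinom_add_mul_qfact_mul_qfact p (q + 1)
    have h₂ := qbinom_add_mul_qfact_mul_qfact (p + 1) q
    have hq : qint (p + 1 + (q + 1)) = qint (p + 1) + X ^ (p + 1) * qint (q + 1) := qint_add _ _
    rw [show p + 1 + (q + 1) = p + (q + 1) + 1 by omega] at hq ⊢
    rw [qfact_succ q] at h₁
    rw [show p + 1 + q = p + (q + 1) by omega, qfact_succ p] at h₂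
    rw [qbinom_succ_succ, qfact_succ (p + (q + 1)), hq, qfact_succ p, qfact_succ q]
    linear_combination qint (p + 1) * h₁ + X ^ (p + 1) * qint (q + 1) * h₂
termination_by p q => p + q

theorem qbinom_succ_succ' (n k : ℕ) :
    qbinom (n + 1) (k + 1) = X ^ (n - k) * qbinom n k + qbinom n (k + 1) := by
  rcases lt_or_ge n k with hnk | hkn
  · rw [qbinom_eq_zero_of_lt hnk, qbinom_eq_zero_of_lt (by omega), qbinom_eq_zero_of_lt (by omega)]
    ring
  obtain ⟨_ | q, rfl⟩ := Nat.exists_eq_add_of_le hkn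
  · simp [qbinom_self, qbinom_eq_zero_of_lt]
  apply mul_right_cancel₀ (mul_ne_zero (qfact_ne_zero (k + 1)) (qfact_ne_zero (q + 1)))
  have h₀ := qbinom_add_mul_qfact_mul_qfact (k + 1) (q + 1)
  have h₁ := qbinom_add_mul_qfact_mul_qfact k (q + 1)
  have h₂ := qbinom_add_mul_qfact_mul_qfact (k + 1) q
  have hq : qint (k + (q + 1) + 1) = qint (q + 1) + X ^ (q + 1) * qint (k + 1) := by
    rw [← qint_add]; congr 1; omega
  rw [show k + 1 + (q + 1) = k + (q + 1) + 1 by omega, qfact_succ (k + (q + 1)), hq] at h₀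
  rw [show k + 1 + q = k + (q + 1) by omega] at h₂
  rw [show k + (q + 1) - k = q + 1 by omega]
  simp only [qfact_succ k, qfact_succ q] at h₀ h₁ h₂ ⊢
  linear_combination h₀ - X ^ (q + 1) * qint (k + 1) * h₁ - qint (q + 1) * h₂

theorem qint_succ_mul_qbinom_succ_succ (n k : ℕ) :
    qint (k + 1) * qbinom (n + 1) (k + 1) = qint (n + 1) * qbinom n k := by
  rcases lt_or_ge n k with hnk | hkn
  · rw [qbinom_eq_zero_of_lt hnk, qbinom_eq_zero_of_lt (by omega), mul_zero, mul_zero]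
  obtain ⟨q, rfl⟩ := Nat.exists_eq_add_of_le hkn
  apply mul_right_cancel₀ (mul_ne_zero (qfact_ne_zero k) (qfact_ne_zero q))
  have h₀ := qbinom_add_mul_qfact_mul_qfact (k + 1) q
  have h₁ := qbinom_add_mul_qfact_mul_qfact k q
  rw [show k + 1 + q = k + q + 1 by omega, qfact_succ (k + q), qfact_succ k] at h₀
  linear_combination h₀ - qint (k + q + 1) * h₁

theorem sum_range_X_pow_mul_qbinom (a n : ℕ) :
    ∑ h ∈ range n, X ^ h * qbinom h a = X ^ a * qbinom n (a + 1) := by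
  induction n with
  | zero => simp [qbinom_zero_succ]
  | succ n ih =>
    rw [sum_range_succ, ih, qbinom_succ_succ']
    rcases le_or_gt a n with h | h
    · rw [mul_add, ← mul_assoc, ← pow_add, Nat.add_sub_cancel' h]; ring
    · rw [qbinom_eq_zero_of_lt h]; ring

theorem qbinom_add (M N r : ℕ) : qbinom (M + N) r =
    ∑ k ∈ range (r + 1), X ^ ((M - k) * (r - k)) * (qbinom M k * qbinom N (r - k)) := by
  induction N generalizing r with
  | zero =>
    rw [sum_eq_single_of_mem r (self_mem_range_succ r)]
    · simp [qbinom_zero_right]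
    · intro k hk hkr
      have hlt : k < r := lt_of_le_of_ne (Nat.lt_succ_iff.mp (mem_range.mp hk)) hkr
      rw [qbinom_eq_zero_of_lt (Nat.sub_pos_of_lt hlt), mul_zero, mul_zero]
  | succ N ih =>
    cases r with
    | zero => simp [qbinom_zero_right]
    | succ t =>
      have hterm : ∀ k ∈ range (t + 1),
          X ^ ((M - k) * (t + 1 - k)) * (qbinom M k * qbinom (N + 1) (t + 1 - k))
            = X ^ (M + N - t) * (X ^ ((M - k) * (t - k)) * (qbinom M k * qbinom N (t - k)))
              + X ^ ((M - k) * (t + 1 - k)) * (qbinom M k * qbinom N (t + 1 - k)) := by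
        intro k hk
        have hkt := Nat.lt_succ_iff.mp (mem_range.mp hk)
        rw [show t + 1 - k = t - k + 1 by omega, qbinom_succ_succ']
        rcases lt_or_ge M k with hMk | hkM
        · rw [qbinom_eq_zero_of_lt hMk]; ring
        rcases lt_or_ge N (t - k) with hN | hN
        · rw [qbinom_eq_zero_of_lt hN]; ring
        have hexp : (M - k) * (t - k + 1) + (N - (t - k)) = (M + N - t) + (M - k) * (t - k) := by
          rw [Nat.mul_succ]; omega
        have hpow : (X : ℤ[X]) ^ ((M - k) * (t - k + 1)) * X ^ (N - (t - k))
            = X ^ (M + N - t) * X ^ ((M - k) * (t - k)) := by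
          rw [← pow_add, ← pow_add, hexp]
        linear_combination (qbinom M k * qbinom N (t - k)) * hpow
      rw [← add_assoc, qbinom_succ_succ', ih, ih, sum_range_succ _ (t + 1),
        sum_range_succ _ (t + 1), sum_congr rfl hterm, sum_add_distrib, ← mul_sum]
      simp only [tsub_self, mul_zero, pow_zero, qbinom_zero_right, mul_one, one_mul]
      ring

theorem qbinom_add_mul_qbinom (a m c : ℕ) :
    qbinom (a + m) a * qbinom m c = qbinom (a + m) (a + c) * qbinom (a + c) a := by
  rcases lt_or_ge m c with hmc | hcm
  · rw [qbinom_eq_zero_of_lt hmc, qbinom_eq_zero_of_lt (by omega : a + m < a + c)]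
    ring
  obtain ⟨d, rfl⟩ := Nat.exists_eq_add_of_le hcm
  apply mul_right_cancel₀
    (mul_ne_zero (qfact_ne_zero a) (mul_ne_zero (qfact_ne_zero c) (qfact_ne_zero d)))
  have h₁ := qbinom_add_mul_qfact_mul_qfact a (c + d)
  have h₂ := qbinom_add_mul_qfact_mul_qfact c d
  have h₃ := qbinom_add_mul_qfact_mul_qfact (a + c) d
  have h₄ := qbinom_add_mul_qfact_mul_qfact a c
  rw [← add_assoc] at h₁ ⊢
  linear_combination h₁ + qbinom (a + c + d) a * qfact a * h₂ - h₃
    - qbinom (a + c + d) (a + c) * qfact d * h₄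

theorem qbinom_mul_qbinom (h a b : ℕ) :
    qbinom h a * qbinom h b = ∑ k ∈ range (b + 1),
      X ^ ((a - k) * (b - k)) * qbinom a k * qbinom (a + b - k) a * qbinom h (a + b - k) := by
  rcases lt_or_ge h a with hha | hah
  · rw [qbinom_eq_zero_of_lt hha, zero_mul, eq_comm]
    refine sum_eq_zero fun k hk ↦ ?_
    rw [qbinom_eq_zero_of_lt (by have := mem_range.mp hk; omega : h < a + b - k), mul_zero]
  obtain ⟨m, rfl⟩ := Nat.exists_eq_add_of_le hah
  rw [qbinom_add a m b, mul_sum]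
  refine sum_congr rfl fun k hk ↦ ?_
  have hkb := Nat.lt_succ_iff.mp (mem_range.mp hk)
  rw [show a + b - k = a + (b - k) by omega]
  linear_combination X ^ ((a - k) * (b - k)) * qbinom a k * qbinom_add_mul_qbinom a m (b - k)

theorem qfact_mul_qfact_mul_qfact_dvd {a b k : ℕ} (hka : k ≤ a) (hkb : k ≤ b) (r : ℕ) :
    qfact a * qfact b * qfact (a + b - k + r) ∣
      qfact (a + b + r) * (qbinom a k * qbinom (a + b - k) a) * qfact (a + b - k) := by
  obtain ⟨i, rfl⟩ := Nat.exists_eq_add_of_le hka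
  obtain ⟨j, rfl⟩ := Nat.exists_eq_add_of_le hkb
  have hc : k + i + (k + j) - k = k + i + j := by omega
  have hN : k + i + (k + j) + r = k + (k + i + j + r) := by omega
  rw [hc, hN]
  refine ⟨qbinom (k + (k + i + j + r)) k * qbinom (k + i + j) (k + i) *
    qbinom (k + i + j) (k + j), ?_⟩
  apply mul_right_cancel₀
    (mul_ne_zero (qfact_ne_zero k) (mul_ne_zero (qfact_ne_zero i) (qfact_ne_zero j)))
  have e₁ := qbinom_add_mul_qfact_mul_qfact k i
  have e₂ := qbinom_add_mul_qfact_mul_qfact (k + i) j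
  have e₃ := qbinom_add_mul_qfact_mul_qfact (k + j) i
  have e₄ := qbinom_add_mul_qfact_mul_qfact k (k + i + j + r)
  rw [show k + j + i = k + i + j by omega] at e₃
  set A := qfact (k + (k + i + j + r))
  set C := qfact (k + i + j)
  linear_combination (A * qbinom (k + i + j) (k + i) * C * qfact j) * e₁
    + (A * C - qfact (k + j) * A * qbinom (k + i + j) (k + j) * qfact i) * e₂ - A * C * e₃
    - qfact (k + i) * qfact (k + j) * qbinom (k + i + j) (k + i) * qbinom (k + i + j) (k + j)
      * qfact i * qfact j * e₄

theorem qint_mul_qfact_dvd (a n : ℕ) :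
    qint n * qfact a ∣ qfact (a + 1) * ∑ h ∈ range n, X ^ h * qbinom h a := by
  rw [sum_range_X_pow_mul_qbinom]
  cases n with
  | zero => simp [qbinom_zero_succ]
  | succ n =>
    refine ⟨X ^ a * qbinom n a, ?_⟩
    rw [qfact_succ]
    linear_combination X ^ a * qfact a * qint_succ_mul_qbinom_succ_succ n a

theorem qint_mul_qfact_mul_prod_dvd (t : List ℕ) (a n : ℕ) :
    qint n * (qfact a * (t.map qfact).prod) ∣
      qfact (a + t.sum + 1) *
        ∑ h ∈ range n, X ^ h * (qbinom h a * (t.map (qbinom h)).prod) := by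
  induction t generalizing a with
  | nil => simpa using qint_mul_qfact_dvd a n
  | cons b t ih =>
    simp only [List.map_cons, List.prod_cons, List.sum_cons]
    have hsum : ∑ h ∈ range n, X ^ h * (qbinom h a * (qbinom h b * (t.map (qbinom h)).prod)) =
        ∑ k ∈ range (b + 1), X ^ ((a - k) * (b - k)) * qbinom a k * qbinom (a + b - k) a *
          ∑ h ∈ range n, X ^ h * (qbinom h (a + b - k) * (t.map (qbinom h)).prod) := by
      simp_rw [← mul_assoc (qbinom _ a), qbinom_mul_qbinom, sum_mul, mul_sum]
      rw [sum_comm]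
      exact sum_congr rfl fun k _ ↦ sum_congr rfl fun h _ ↦ by ring
    rw [hsum, mul_sum]
    refine dvd_sum fun k hk ↦ ?_
    have hkb := Nat.lt_succ_iff.mp (mem_range.mp hk)
    rcases lt_or_ge a k with hak | hka
    · simp [qbinom_eq_zero_of_lt hak]
    have hcoeff := qfact_mul_qfact_mul_qfact_dvd hka hkb (t.sum + 1)
    have hc : qfact (a + b - k) * qfact (a + b - k + (t.sum + 1)) ≠ 0 :=
      mul_ne_zero (qfact_ne_zero _) (qfact_ne_zero _)
    rw [← mul_dvd_mul_iff_right hc, show a + (b + t.sum) + 1 = a + b + (t.sum + 1) by ring]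
    have hrest := ih (a + b - k)
    rw [add_assoc _ t.sum 1] at hrest
    convert (mul_dvd_mul hcoeff hrest).mul_left (X ^ ((a - k) * (b - k))) using 1 <;> ring

theorem stmt1_general (m n : ℕ) (a : Fin m → ℕ) :
    qint n * ∏ i, qfact (a i) ∣
      qfact (∑ i, a i + 1) * ∑ h ∈ Finset.range n, X ^ h * ∏ i, qbinom h (a i) := by
  cases m with
  | zero => simp [qfact, qint]
  | succ m =>
    simpa [Fin.prod_univ_succ, Fin.sum_univ_succ, List.map_ofFn, List.prod_ofFn, List.sum_ofFn,
      Function.comp_def] using qint_mul_qfact_mul_prod_dvd (List.ofFn (a ∘ Fin.succ)) (a 0) n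

/-- `[n]_q` divides `([a_1+⋯+a_m+1]_q!/([a_1]_q!⋯[a_m]_q!)) ∑_{h<n} q^h ∏ [h choose a_i]_q`
in `ℤ[q]`.  Since the prefactor is the polynomial `[a_1+⋯+a_m+1]_q!` divided by the (nonzero)
polynomial `∏ [a_i]_q!`, this is equivalently stated by multiplying through by `∏ [a_i]_q!`. -/
theorem stmt1 (m n : ℕ) (hm : 1 ≤ m) (hn : 1 ≤ n) (a : Fin m → ℕ) :
    qint n * ∏ i, qfact (a i) ∣
      qfact (∑ i, a i + 1) * ∑ h ∈ Finset.range n, X ^ h * ∏ i, qbinom h (a i) :=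
  stmt1_general m n a
end

section
/- For any positive integers m, n and nonnegative integers a_1, ..., a_m, the integer ((a_1+⋯+a_m+1)! / (a_1! ⋯ a_m!)) · ∑_{h=0}^{n-1} ∏_{i=1}^m C(h, a_i) is divisible by n, where C(h, a) denotes the binomial coefficient. -/
/-!
Expanding `C(h, x) C(h, y) = ∑ i ≤ y, C(x + i, x) C(x, y - i) C(h, x + i)` merges two binomial
factors into one. So carry an extra factor `C(h, k)` and absorb the `a_i` into it one at a time:
the factorials created by merging `k` with `a_0` are exactly those supplied by the induction
hypothesis at `k + i` (`factorial_mul_choose_mul_choose_mul_factorial`). When no `a_i` is left,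
the hockey-stick identity gives
`(k + 1)! ∑ h < n, C(h, k) = (k + 1)! C(n, k + 1) = n k! C(n - 1, k)`.
The theorem is the case `k = 0`.
-/

open Polynomial Finset

namespace Nat

theorem sum_range_choose_eq_choose_add_one (n k : ℕ) :
    ∑ h ∈ range n, h.choose k = n.choose (k + 1) := by
  induction n with
  | zero => simp
  | succ n ih => rw [sum_range_succ, ih, choose_succ_succ', add_comm]

theorem choose_mul_choose_eq_sum (h x y : ℕ) :
    h.choose x * h.choose y =
      ∑ i ∈ range (y + 1), (x + i).choose x * x.choose (y - i) * h.choose (x + i) := by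
  have hterm (i : ℕ) : (x + i).choose x * x.choose (y - i) * h.choose (x + i) =
      h.choose x * ((h - x).choose i * x.choose (y - i)) := by
    rw [mul_comm _ (h.choose _), ← mul_assoc, choose_mul (le_add_right x i), add_tsub_cancel_left,
      mul_assoc]
  rcases lt_or_ge h x with hhx | hxh
  · simp [hterm, choose_eq_zero_of_lt hhx]
  · rw [sum_congr rfl fun i _ => hterm i, ← mul_sum,
      ← Finset.Nat.sum_antidiagonal_eq_sum_range_succ fun i l => (h - x).choose i * x.choose l,
      ← add_choose_eq, tsub_add_cancel_of_le hxh]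

theorem factorial_mul_choose_mul_choose_mul_factorial (x y s i : ℕ) (hi : i ≤ y) :
    (x + y + s + 1)! * ((x + i).choose x * x.choose (y - i)) * (x + i)! =
      (x + i).choose x * (x + i).choose y * (x + y + s + 1).choose (y - i) *
        (x ! * y ! * (x + i + s + 1)!) := by
  rcases lt_or_ge x (y - i) with hx | hx
  · simp [choose_eq_zero_of_lt hx, choose_eq_zero_of_lt (show x + i < y by omega)]
  obtain ⟨t, rfl⟩ : ∃ t, y = t + i := ⟨y - i, by omega⟩
  rw [add_tsub_cancel_right] at hx ⊢
  obtain ⟨p, rfl⟩ : ∃ p, x = t + p := ⟨x - t, by omega⟩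
  have e1 : (t + p).choose t * p ! * t ! = (t + p)! := by
    simpa [add_comm] using add_choose_mul_factorial_mul_factorial p t
  have e2 : (t + p + i).choose (t + i) * p ! * (t + i)! = (t + p + i)! := by
    simpa [add_comm, add_left_comm, add_assoc] using
      add_choose_mul_factorial_mul_factorial p (t + i)
  have e3 : (t + p + (t + i) + s + 1).choose t * (t + p + i + s + 1)! * t ! =
      (t + p + (t + i) + s + 1)! := by
    simpa [add_comm, add_left_comm, add_assoc] using
      add_choose_mul_factorial_mul_factorial (t + p + i + s + 1) t
  apply Nat.eq_of_mul_eq_mul_right (mul_pos (factorial_pos p) (factorial_pos t))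
  calc _ = (t + p + i).choose (t + p) * (t + p + (t + i) + s + 1)! *
          ((t + p).choose t * p ! * t !) * (t + p + i)! := by ring
    _ = _ := by rw [e1, ← e2, ← e3]; ring

theorem mul_factorial_mul_prod_factorial_dvd_factorial_mul_sum {m : ℕ} (n k : ℕ)
    (a : Fin m → ℕ) :
    n * (k ! * ∏ i, (a i)!) ∣
      (k + ∑ i, a i + 1)! * ∑ h ∈ range n, h.choose k * ∏ i, h.choose (a i) := by
  induction m generalizing k with
  | zero =>
    rcases n with _ | n
    · simp
    refine ⟨n.choose k, ?_⟩
    simp only [univ_eq_empty, prod_empty, sum_empty, mul_one, add_zero,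
      sum_range_choose_eq_choose_add_one, factorial_succ]
    linarith [congrArg (· * k !) (add_one_mul_choose_eq n k)]
  | succ m ih =>
    have expand : ∑ h ∈ range n, h.choose k * ∏ i, h.choose (a i) =
        ∑ i ∈ range (a 0 + 1), (k + i).choose k * k.choose (a 0 - i) *
          ∑ h ∈ range n, h.choose (k + i) * ∏ j : Fin m, h.choose (a j.succ) := by
      simp_rw [Fin.prod_univ_succ, ← mul_assoc, choose_mul_choose_eq_sum, sum_mul, mul_sum]
      rw [sum_comm]
      exact sum_congr rfl fun i _ => sum_congr rfl fun h _ => by ring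
    rw [expand, Fin.sum_univ_succ, Fin.prod_univ_succ, ← add_assoc, mul_sum]
    refine dvd_sum fun i hi => ?_
    set s := ∑ j : Fin m, a j.succ
    set S := ∑ h ∈ range n, h.choose (k + i) * ∏ j : Fin m, h.choose (a j.succ)
    have hS : n * ((k + i)! * ∏ j : Fin m, (a j.succ)!) ∣ (k + i + s + 1)! * S :=
      ih (k + i) fun j => a j.succ
    have hcoeff := factorial_mul_choose_mul_choose_mul_factorial k (a 0) s i
      (by simpa [Nat.lt_succ_iff] using hi)
    apply Nat.dvd_of_mul_dvd_mul_right (factorial_pos (k + i))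
    calc n * (k ! * ((a 0)! * ∏ j : Fin m, (a j.succ)!)) * (k + i)!
        = k ! * (a 0)! * (n * ((k + i)! * ∏ j : Fin m, (a j.succ)!)) := by ring
      _ ∣ (k + i).choose k * (k + i).choose (a 0) * (k + a 0 + s + 1).choose (a 0 - i) *
            (k ! * (a 0)!) * ((k + i + s + 1)! * S) := mul_dvd_mul (dvd_mul_left _ _) hS
      _ = (k + a 0 + s + 1)! * ((k + i).choose k * k.choose (a 0 - i)) * (k + i)! * S := by
        rw [hcoeff]; ring
      _ = _ := by ring

end Nat

open Nat in
theorem stmt2_general (m n : ℕ) (a : Fin m → ℕ) :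
    n ∣ ((∑ i, a i + 1).factorial / ∏ i, (a i).factorial) *
        ∑ h ∈ Finset.range n, ∏ i, h.choose (a i) := by
  have hdvd :
      n * ∏ i, (a i)! ∣ (∑ i, a i + 1)! * ∑ h ∈ range n, ∏ i, h.choose (a i) := by
    simpa using mul_factorial_mul_prod_factorial_dvd_factorial_mul_sum n 0 a
  have hprod : ∏ i, (a i)! ∣ (∑ i, a i + 1)! :=
    (prod_factorial_dvd_factorial_sum _ _).trans (factorial_dvd_factorial (le_succ _))
  refine Nat.dvd_of_mul_dvd_mul_right (k := ∏ i, (a i)!) (by positivity) ?_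
  rwa [mul_right_comm, Nat.div_mul_cancel hprod]

/-- `n` divides `((a_1+⋯+a_m+1)!/(a_1!⋯a_m!)) ∑_{h<n} ∏ C(h,a_i)`. -/
theorem stmt2 (m n : ℕ) (hm : 1 ≤ m) (hn : 1 ≤ n) (a : Fin m → ℕ) :
    n ∣ ((∑ i, a i + 1).factorial / ∏ i, (a i).factorial) *
        ∑ h ∈ Finset.range n, ∏ i, h.choose (a i) :=
  stmt2_general m n a
end

section
/- For any positive integers n and m and nonnegative integer k, the integer ((km+1)!/(k!)^m) · ∑_{h=0}^{n-1} C(h,k)^m is divisible by n. -/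
open Polynomial Finset

/-!
Put `M = (km)!/(k!)^m`, a multinomial coefficient. In the binomial-basis expansion
`M · C(h,k)^m = ∑ₐ cₐ C(h,a)` every `cₐ` is a multiple of `C(km,a)`: this property survives
multiplication by `C(km+k,k) · C(h,k)` thanks to the identity
`C(b+k,k) C(b,a) C(a,k-i) = C(b+k,a+i) C(b+k-a-i,k-i) C(a+i,k)`.
Summing over `h < n` turns `C(h,a)` into `C(n,a+1)`, and then
`(km+1) C(km,a) C(n,a+1) = C(km+1,a+1) (a+1) C(n,a+1) = C(km+1,a+1) n C(n-1,a)`.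
-/

theorem choose_mul_choose_eq_sum (h a k : ℕ) :
    h.choose a * h.choose k =
      ∑ i ∈ range (k + 1), (a + i).choose a * a.choose (k - i) * h.choose (a + i) := by
  rcases lt_or_ge h a with hlt | hle
  · rw [Nat.choose_eq_zero_of_lt hlt, zero_mul]
    refine (sum_eq_zero fun i _ => ?_).symm
    rw [Nat.choose_eq_zero_of_lt (show h < a + i by omega), mul_zero]
  · obtain ⟨c, rfl⟩ := Nat.exists_eq_add_of_le hle
    have vandermonde : (a + c).choose k = ∑ i ∈ range (k + 1), c.choose i * a.choose (k - i) := by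
      rw [add_comm, Nat.add_choose_eq, Nat.sum_antidiagonal_eq_sum_range_succ_mk]
    rw [vandermonde, mul_sum]
    refine sum_congr rfl fun i _ => ?_
    have subset_of_subset := Nat.choose_mul (n := a + c) (Nat.le_add_right a i)
    simp only [Nat.add_sub_cancel_left] at subset_of_subset
    rw [← mul_assoc, ← subset_of_subset]
    ring

theorem choose_add_mul_choose_mul_choose {a b i k : ℕ} (hab : a ≤ b) (hik : i ≤ k) :
    (b + k).choose k * (b.choose a * a.choose (k - i)) =
      (b + k).choose (a + i) * ((b + k - (a + i)).choose (k - i) * (a + i).choose k) := by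
  rcases lt_or_ge (a + i) k with hlt | hge
  · rw [Nat.choose_eq_zero_of_lt (show a < k - i by omega), Nat.choose_eq_zero_of_lt hlt]
    simp
  · have e1 : a - (k - i) = a + i - k := by omega
    have e2 : b + k - (a + i) - (k - i) = b - a := by omega
    qify
    rw [Nat.cast_choose ℚ (Nat.le_add_left k b), Nat.cast_choose ℚ hab,
      Nat.cast_choose ℚ (show k - i ≤ a by omega), Nat.cast_choose ℚ (show a + i ≤ b + k by omega),
      Nat.cast_choose ℚ (show k - i ≤ b + k - (a + i) by omega), Nat.cast_choose ℚ hge, e1, e2,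
      Nat.add_sub_cancel]
    field_simp

/-- Functions `h ↦ ∑ₐ cₐ C(h, a)` whose coefficient `cₐ` in the binomial basis is a multiple of
`C(N, a)`. -/
def chooseSpan (N : ℕ) : AddSubmonoid (ℕ → ℕ) :=
  AddSubmonoid.closure (Set.range fun a h => N.choose a * h.choose a)

theorem choose_mul_choose_mem_chooseSpan (N a : ℕ) :
    (fun h => N.choose a * h.choose a) ∈ chooseSpan N :=
  AddSubmonoid.subset_closure ⟨a, rfl⟩

theorem mul_choose_mem_chooseSpan {N : ℕ} (k : ℕ) {f : ℕ → ℕ} (hf : f ∈ chooseSpan N) :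
    (fun h => (N + k).choose k * h.choose k) * f ∈ chooseSpan (N + k) := by
  suffices chooseSpan N ≤
      (chooseSpan (N + k)).comap (AddMonoidHom.mulLeft fun h => (N + k).choose k * h.choose k) from
    this hf
  refine AddSubmonoid.closure_le.2 ?_
  rintro _ ⟨a, rfl⟩
  rw [SetLike.mem_coe, AddSubmonoid.mem_comap, AddMonoidHom.coe_mulLeft]
  rcases lt_or_ge N a with hlt | hle
  · convert zero_mem (chooseSpan (N + k))
    ext h
    simp [Nat.choose_eq_zero_of_lt hlt]
  · have expand :
        (fun h : ℕ => (N + k).choose k * h.choose k) * (fun h => N.choose a * h.choose a) =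
        ∑ i ∈ range (k + 1), ((a + i).choose a * ((N + k - (a + i)).choose (k - i) *
          (a + i).choose k)) • fun h => (N + k).choose (a + i) * h.choose (a + i) := by
      ext h
      simp only [Pi.mul_apply, Finset.sum_apply, Pi.smul_apply, smul_eq_mul]
      calc (N + k).choose k * h.choose k * (N.choose a * h.choose a)
          = ∑ i ∈ range (k + 1), (a + i).choose a *
              ((N + k).choose k * (N.choose a * a.choose (k - i))) * h.choose (a + i) := by
            rw [mul_mul_mul_comm, mul_comm (h.choose k), choose_mul_choose_eq_sum, mul_sum]
            exact sum_congr rfl fun i _ => by ring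
        _ = _ := sum_congr rfl fun i hi => by
            rw [choose_add_mul_choose_mul_choose hle (mem_range_succ_iff.1 hi)]
            ring
    rw [expand]
    exact sum_mem fun i _ => AddSubmonoid.nsmul_mem _ (choose_mul_choose_mem_chooseSpan _ _) _

theorem multinomial_mul_choose_pow_mem_chooseSpan (k m : ℕ) :
    (fun h => Nat.multinomial (range m) (fun _ => k) * h.choose k ^ m) ∈ chooseSpan (k * m) := by
  induction m with
  | zero => simpa using choose_mul_choose_mem_chooseSpan 0 0
  | succ m ih =>
    have hM : Nat.multinomial (range (m + 1)) (fun _ => k) =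
        (k * m + k).choose k * Nat.multinomial (range m) (fun _ => k) := by
      rw [range_add_one, Nat.multinomial_insert notMem_range_self, sum_const, card_range,
        smul_eq_mul, add_comm, mul_comm m]
    rw [mul_add_one]
    convert mul_choose_mem_chooseSpan k ih using 1
    ext h
    rw [Pi.mul_apply, hM]
    ring

theorem sum_range_choose_eq_choose_succ (n a : ℕ) :
    ∑ h ∈ range n, h.choose a = n.choose (a + 1) := by
  induction n with
  | zero => simp
  | succ n ih => rw [sum_range_succ, ih, Nat.choose_succ_succ', add_comm]

theorem dvd_succ_mul_sum_range_of_mem_chooseSpan {N : ℕ} {f : ℕ → ℕ} (hf : f ∈ chooseSpan N)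
    (n : ℕ) : n ∣ (N + 1) * ∑ h ∈ range n, f h := by
  induction hf using AddSubmonoid.closure_induction with
  | mem _ hg =>
    obtain ⟨a, rfl⟩ := hg
    rcases n with _ | n
    · simp
    · rw [← mul_sum, sum_range_choose_eq_choose_succ, ← mul_assoc, Nat.add_one_mul_choose_eq]
      exact ⟨(N + 1).choose (a + 1) * n.choose a, by
        rw [mul_left_comm (n + 1), Nat.add_one_mul_choose_eq]; ring⟩
  | zero => simp
  | add f g _ _ hf hg => simpa only [Pi.add_apply, sum_add_distrib, mul_add] using dvd_add hf hg

theorem factorial_succ_div_factorial_pow (k m : ℕ) :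
    (k * m + 1).factorial / k.factorial ^ m =
      (k * m + 1) * Nat.multinomial (range m) (fun _ => k) := by
  have spec := Nat.multinomial_spec (range m) (fun _ => k)
  rw [prod_const, sum_const, card_range, smul_eq_mul, mul_comm m] at spec
  rw [Nat.factorial_succ, ← spec, ← mul_assoc, mul_right_comm,
    Nat.mul_div_cancel _ (by positivity)]

theorem stmt3_general (n m k : ℕ) :
    n ∣ ((k * m + 1).factorial / k.factorial ^ m) *
        ∑ h ∈ Finset.range n, (h.choose k) ^ m := by
  rw [factorial_succ_div_factorial_pow, mul_assoc, mul_sum]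
  exact dvd_succ_mul_sum_range_of_mem_chooseSpan (multinomial_mul_choose_pow_mem_chooseSpan k m) n

/-- `n` divides `((km+1)!/(k!)^m) ∑_{h<n} C(h,k)^m`. -/
theorem stmt3 (n m k : ℕ) (hn : 1 ≤ n) (hm : 1 ≤ m) :
    n ∣ ((k * m + 1).factorial / k.factorial ^ m) *
        ∑ h ∈ Finset.range n, (h.choose k) ^ m :=
  stmt3_general n m k
end

section
/- For any positive integers n > k, the integer (2k+1) · C(2k,k) · ∑_{h=0}^{n-1} C(h,k)^2 is divisible by n. -/
open Polynomial Finset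

/-- Hockey-stick identity, `range` version. -/
lemma my_hockey (n m : ℕ) : ∑ h ∈ Finset.range n, h.choose m = n.choose (m + 1) := by
  induction n with
  | zero => simp
  | succ n ih =>
    rw [Finset.sum_range_succ, ih, Nat.choose_succ_succ' n m, Nat.add_comm]

/-- Product formula: `C(h,k)² = ∑_{j≤k} C(k,j) C(2k-j,k) C(h,2k-j)`. -/
lemma my_prodform (h k : ℕ) :
    h.choose k ^ 2
      = ∑ j ∈ Finset.range (k + 1), k.choose j * ((2 * k - j).choose k * h.choose (2 * k - j)) := by
  rcases lt_or_ge h k with hlt | hle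
  · rw [Nat.choose_eq_zero_of_lt hlt]
    refine Eq.trans (by ring) (Finset.sum_eq_zero ?_).symm
    intro j hj
    rw [Finset.mem_range] at hj
    rw [Nat.choose_eq_zero_of_lt (show h < 2 * k - j by omega), mul_zero, mul_zero]
  · have key : ∀ j ∈ Finset.range (k + 1),
        k.choose j * ((2 * k - j).choose k * h.choose (2 * k - j))
          = h.choose k * (k.choose j * (h - k).choose (k - j)) := by
      intro j hj
      rw [Finset.mem_range] at hj
      rcases lt_or_ge h (2 * k - j) with h2 | h2
      · rw [Nat.choose_eq_zero_of_lt h2,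
          Nat.choose_eq_zero_of_lt (show h - k < k - j by omega)]
        ring
      · have t := Nat.choose_mul (n := h) (show k ≤ 2 * k - j by omega)
        rw [show 2 * k - j - k = k - j by omega] at t
        rw [mul_comm ((2 * k - j).choose k), t]
        ring
    rw [Finset.sum_congr rfl key, ← Finset.mul_sum]
    have v := Nat.add_choose_eq k (h - k) k
    rw [Finset.Nat.sum_antidiagonal_eq_sum_range_succ_mk, show k + (h - k) = h by omega] at v
    rw [← v, sq]

/-- Coefficient identity: `(2k+1) C(2k,k) C(k,j) = C(2k-j,k) C(2k+1,j) (2k+1-j)`. -/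
lemma my_coefid (k j : ℕ) (hj : j ≤ k) :
    (2 * k + 1) * (2 * k).choose k * k.choose j
      = (2 * k - j).choose k * (2 * k + 1).choose j * (2 * k + 1 - j) := by
  have a : (2 * k + 1) * (2 * k).choose k = (2 * k + 1).choose (k + 1) * (k + 1) :=
    Nat.add_one_mul_choose_eq (2 * k) k
  have a' : (2 * k + 1).choose (k + 1) = (2 * k + 1).choose k := by
    have := Nat.choose_symm (show k + 1 ≤ 2 * k + 1 by omega)
    rw [show 2 * k + 1 - (k + 1) = k by omega] at this
    exact this.symm
  have b : (k + 1) * k.choose j = (k + 1).choose j * (k + 1 - j) := by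
    rw [Nat.add_one_mul_choose_eq k j, Nat.choose_succ_right_eq (k + 1) j]
  have c : (2 * k + 1).choose k * (k + 1).choose j
      = (2 * k + 1).choose j * (2 * k + 1 - j).choose k := by
    have c1 := Nat.choose_mul (n := 2 * k + 1) (show k ≤ k + j by omega)
    have c2 := Nat.choose_mul (n := 2 * k + 1) (show j ≤ k + j by omega)
    rw [show 2 * k + 1 - k = k + 1 by omega, show k + j - k = j by omega] at c1
    rw [show k + j - j = k by omega] at c2
    have csymm : (k + j).choose k = (k + j).choose j := by
      have := Nat.choose_symm (show k ≤ k + j by omega)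
      rw [show k + j - k = j by omega] at this
      exact this.symm
    rw [← c1, ← c2, csymm]
  have d : (2 * k + 1 - j) * (2 * k - j).choose k = (2 * k + 1 - j).choose k * (k + 1 - j) := by
    have d1 := Nat.add_one_mul_choose_eq (2 * k - j) k
    have d2 := Nat.choose_succ_right_eq (2 * k - j + 1) k
    rw [show 2 * k - j + 1 = 2 * k + 1 - j by omega] at d1 d2
    rw [show 2 * k + 1 - j - k = k + 1 - j by omega] at d2
    rw [d1, d2]
  calc (2 * k + 1) * (2 * k).choose k * k.choose j
      = (2 * k + 1).choose (k + 1) * (k + 1) * k.choose j := by rw [a]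
    _ = (2 * k + 1).choose k * ((k + 1) * k.choose j) := by rw [a']; ring
    _ = (2 * k + 1).choose k * ((k + 1).choose j * (k + 1 - j)) := by rw [b]
    _ = (2 * k + 1).choose k * (k + 1).choose j * (k + 1 - j) := by ring
    _ = (2 * k + 1).choose j * (2 * k + 1 - j).choose k * (k + 1 - j) := by rw [c]
    _ = (2 * k + 1).choose j * ((2 * k + 1 - j).choose k * (k + 1 - j)) := by ring
    _ = (2 * k + 1).choose j * ((2 * k + 1 - j) * (2 * k - j).choose k) := by rw [d]
    _ = (2 * k - j).choose k * (2 * k + 1).choose j * (2 * k + 1 - j) := by ring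

/-- for `0 < k < n`, `n` divides `(2k+1) C(2k,k) ∑_{h<n} C(h,k)^2`. -/
theorem stmt5 (n k : ℕ) (hk : 0 < k) (hkn : k < n) :
    n ∣ (2 * k + 1) * (2 * k).choose k * ∑ h ∈ Finset.range n, (h.choose k) ^ 2 := by
  have hn : 0 < n := lt_of_le_of_lt (Nat.zero_le k) hkn
  have key : (2 * k + 1) * (2 * k).choose k * ∑ h ∈ Finset.range n, (h.choose k) ^ 2
      = ∑ j ∈ Finset.range (k + 1),
          (2 * k - j).choose k * (2 * k + 1).choose j * (2 * k - j).choose k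
            * ((2 * k + 1 - j) * n.choose (2 * k + 1 - j)) := by
    rw [Finset.sum_congr rfl (fun h _ => my_prodform h k), Finset.sum_comm, Finset.mul_sum]
    refine Finset.sum_congr rfl ?_
    intro j hj
    rw [Finset.mem_range] at hj
    have hjk : j ≤ k := by omega
    rw [← Finset.mul_sum, ← Finset.mul_sum, my_hockey n (2 * k - j),
      show 2 * k - j + 1 = 2 * k + 1 - j by omega]
    calc (2 * k + 1) * (2 * k).choose k
          * (k.choose j * ((2 * k - j).choose k * n.choose (2 * k + 1 - j)))
        = ((2 * k + 1) * (2 * k).choose k * k.choose j)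
            * (2 * k - j).choose k * n.choose (2 * k + 1 - j) := by ring
      _ = ((2 * k - j).choose k * (2 * k + 1).choose j * (2 * k + 1 - j))
            * (2 * k - j).choose k * n.choose (2 * k + 1 - j) := by rw [my_coefid k j hjk]
      _ = (2 * k - j).choose k * (2 * k + 1).choose j * (2 * k - j).choose k
            * ((2 * k + 1 - j) * n.choose (2 * k + 1 - j)) := by ring
  rw [key]
  refine Finset.dvd_sum ?_
  intro j hj
  rw [Finset.mem_range] at hj
  have hdvd : n ∣ (2 * k + 1 - j) * n.choose (2 * k + 1 - j) := by
    have := Nat.add_one_mul_choose_eq (n - 1) (2 * k - j)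
    rw [show n - 1 + 1 = n by omega,
      show 2 * k - j + 1 = 2 * k + 1 - j by omega] at this
    exact ⟨(n - 1).choose (2 * k - j), by rw [mul_comm ((2 * k + 1 - j)) _, ← this]⟩
  exact Dvd.dvd.mul_left hdvd _
end

section
/- For nonnegative integers a, b and a prime p > max{a, b}, the integer ((a+b+1)!/(a!b!)) · ∑_{h=0}^{p-1} C(h,a) C(h,b) is congruent to (-1)^{a-b} p modulo p^2. -/
open Polynomial Finset

/-!
Expanding `C(h,a) C(h,b) = ∑ₖ C(a,k) C(b,k) C(h+k, a+b)` and summing over `h < p` gives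
`∑ₖ C(a,k) C(b,k) C(p+k, a+b+1)`. Times `(a+b+1)!`, each `C(p+k, a+b+1)` becomes the falling
factorial `(p+k)(p+k-1)⋯(p+k-a-b)`, which is `p` times the product of the other factors, so
modulo `p²` it is `p · k! · (-1)^(a+b-k) (a+b-k)!`. As `C(b,k) k! (a+b-k)! = a! b! C(a+b-k, a)`,
what is left is the alternating sum `∑ₖ (-1)^k C(a,k) C(a+b-k, a)`, an `a`-th forward difference
of `x ↦ C(x,a)`, hence `1`. Finally `a! b!` is prime to `p` and cancels.
-/

namespace Nat

theorem choose_mul_choose_eq_sum_choose_mul_choose (n a b : ℕ) :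
    n.choose a * n.choose b =
      ∑ j ∈ range (a + b + 1), a.choose j * (a + b - j).choose a * n.choose (a + b - j) := by
  rcases lt_or_ge n a with hna | han
  · rw [choose_eq_zero_of_lt hna, zero_mul]
    refine (sum_eq_zero fun j _ ↦ ?_).symm
    rcases le_or_gt j b with hjb | hbj
    · rw [choose_eq_zero_of_lt (by omega : n < a + b - j), mul_zero]
    · rw [choose_eq_zero_of_lt (by omega : a + b - j < a), mul_zero, zero_mul]
  obtain ⟨m, rfl⟩ := Nat.exists_eq_add_of_le han
  have hvdm : (a + m).choose b = ∑ j ∈ range (b + 1), a.choose j * m.choose (b - j) := by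
    rw [add_choose_eq, Finset.Nat.sum_antidiagonal_eq_sum_range_succ_mk]
  rw [hvdm, mul_sum, ← sum_subset (range_subset_range.mpr (by omega : b + 1 ≤ a + b + 1))]
  · refine sum_congr rfl fun j hj ↦ ?_
    have hjb : j ≤ b := Nat.lt_succ_iff.mp (mem_range.mp hj)
    have htri := choose_mul (n := a + m) (k := a + b - j) (s := a) (by omega)
    rw [show a + m - a = m by omega, show a + b - j - a = b - j by omega] at htri
    rw [mul_left_comm, ← htri]
    ring
  · intro j hj hjb
    simp only [mem_range] at hj hjb
    rw [choose_eq_zero_of_lt (by omega : a + b - j < a), mul_zero, zero_mul]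

theorem sum_choose_mul_choose_mul_choose (a b j : ℕ) :
    ∑ k ∈ range (a + 1), a.choose k * b.choose k * k.choose j =
      a.choose j * (a + b - j).choose a := by
  rcases lt_or_ge a j with haj | hja
  · rw [choose_eq_zero_of_lt haj, zero_mul]
    exact sum_eq_zero fun k hk ↦ by
      rw [choose_eq_zero_of_lt (by rw [mem_range] at hk; omega : k < j), mul_zero]
  obtain ⟨x, rfl⟩ := Nat.exists_eq_add_of_le hja
  have hvdm : (b + x).choose (j + x) = ∑ i ∈ range (x + 1), b.choose (j + i) * x.choose i := by
    rw [add_choose_eq, Finset.Nat.sum_antidiagonal_eq_sum_range_succ_mk,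
      show (j + x).succ = j + (x + 1) by omega, sum_range_add, sum_eq_zero fun v hv ↦ by
        rw [choose_eq_zero_of_lt (by rw [mem_range] at hv; omega : x < j + x - v), mul_zero],
      zero_add]
    refine sum_congr rfl fun i hi ↦ ?_
    rw [show j + x - (j + i) = x - i by omega, choose_symm (by rw [mem_range] at hi; omega)]
  rw [show j + x + 1 = j + (x + 1) by omega, sum_range_add, sum_eq_zero fun k hk ↦ by
      rw [choose_eq_zero_of_lt (by rw [mem_range] at hk; omega : k < j), mul_zero], zero_add,
    show j + x + b - j = b + x by omega, hvdm, mul_sum]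
  refine sum_congr rfl fun i _ ↦ ?_
  have htri := choose_mul (n := j + x) (k := j + i) (s := j) (by omega)
  rw [show j + x - j = x by omega, show j + i - j = i by omega] at htri
  rw [mul_right_comm, htri]
  ring

theorem choose_mul_choose_eq_sum_choose_add (n a b : ℕ) :
    n.choose a * n.choose b =
      ∑ k ∈ range (a + 1), a.choose k * b.choose k * (n + k).choose (a + b) := by
  have hvdm (k : ℕ) : (n + k).choose (a + b) =
      ∑ j ∈ range (a + b + 1), k.choose j * n.choose (a + b - j) := by
    rw [add_comm, add_choose_eq, Finset.Nat.sum_antidiagonal_eq_sum_range_succ_mk]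
  simp_rw [hvdm, mul_sum]
  rw [sum_comm, choose_mul_choose_eq_sum_choose_mul_choose]
  refine sum_congr rfl fun j _ ↦ ?_
  rw [← sum_choose_mul_choose_mul_choose, sum_mul]
  exact sum_congr rfl fun k _ ↦ by ring

theorem sum_range_choose_mul_choose (n a b : ℕ) :
    ∑ h ∈ range n, h.choose a * h.choose b =
      ∑ k ∈ range (a + 1), a.choose k * b.choose k * (n + k).choose (a + b + 1) := by
  induction n with
  | zero =>
    refine (sum_eq_zero fun k hk ↦ ?_).symm
    rw [zero_add, choose_eq_zero_of_lt (by rw [mem_range] at hk; omega : k < a + b + 1), mul_zero]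
  | succ n ih =>
    rw [sum_range_succ, ih, choose_mul_choose_eq_sum_choose_add, ← sum_add_distrib]
    refine sum_congr rfl fun k _ ↦ ?_
    rw [add_right_comm n 1 k, choose_succ_succ' (n + k), mul_add, add_comm]

theorem factorial_mul_sum_range_choose_mul_choose (n a b : ℕ) :
    (a + b + 1)! * ∑ h ∈ range n, h.choose a * h.choose b =
      ∑ k ∈ range (a + 1), a.choose k * b.choose k * (n + k).descFactorial (a + b + 1) := by
  rw [sum_range_choose_mul_choose, mul_sum]
  refine sum_congr rfl fun k _ ↦ ?_
  rw [descFactorial_eq_factorial_mul_choose]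
  ring

theorem choose_mul_factorial_mul_factorial_add_sub {a b k : ℕ} (hk : k ≤ a) :
    b.choose k * k ! * (a + b - k)! = a ! * b ! * (a + b - k).choose a := by
  rcases le_or_gt k b with hkb | hbk
  · obtain ⟨d, rfl⟩ := Nat.exists_eq_add_of_le hkb
    have hb := choose_mul_factorial_mul_factorial hkb
    have hab := choose_mul_factorial_mul_factorial (show a ≤ a + (k + d) - k by omega)
    rw [Nat.add_sub_cancel_left] at hb
    rw [show a + (k + d) - k - a = d by omega] at hab
    apply Nat.eq_of_mul_eq_mul_right (factorial_pos d)
    calc (k + d).choose k * k ! * (a + (k + d) - k)! * d !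
        = (k + d).choose k * k ! * d ! * (a + (k + d) - k)! := by ring
      _ = a ! * (k + d)! * (a + (k + d) - k).choose a * d ! := by rw [hb, ← hab]; ring
  · rw [choose_eq_zero_of_lt hbk, choose_eq_zero_of_lt (by omega : a + b - k < a)]
    simp

theorem alternating_sum_choose_mul_choose_add_sub (a b : ℕ) :
    ∑ k ∈ range (a + 1), (-1 : ℤ) ^ k * a.choose k * (a + b - k).choose a = 1 := by
  have hdiff := fwdDiff_iter_eq_sum_shift 1 (fun x : ℕ ↦ (x.choose a : ℤ)) a b
  have hchoose := fwdDiff_iter_choose 0 a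
  rw [add_zero] at hchoose
  simp only [hchoose, choose_zero_right, cast_one, smul_eq_mul, mul_one] at hdiff
  rw [← sum_range_reflect]
  refine (sum_congr rfl fun k hk ↦ ?_).trans hdiff.symm
  have hka : k ≤ a := Nat.lt_succ_iff.mp (mem_range.mp hk)
  rw [add_tsub_cancel_right, choose_symm hka, show a + b - (a - k) = b + k by omega]

end Nat

open Nat

theorem neg_one_pow_sub_of_le {n k : ℕ} (h : k ≤ n) :
    (-1 : ℤ) ^ (n - k) = (-1) ^ n * (-1) ^ k := by
  obtain ⟨d, rfl⟩ := Nat.exists_eq_add_of_le h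
  rw [Nat.add_sub_cancel_left, pow_add, mul_right_comm, ← pow_add, ← two_mul, pow_mul]
  simp

theorem descPochhammer_eval_add_modEq (p : ℤ) {k m : ℕ} (hk : k ≤ m) :
    (descPochhammer ℤ (m + 1)).eval (p + k) ≡
      p * (k ! * ((-1) ^ (m - k) * (m - k)!)) [ZMOD p ^ 2] := by
  obtain ⟨j, rfl⟩ := Nat.exists_eq_add_of_le hk
  rw [Nat.add_sub_cancel_left, add_right_comm]
  have hsplit : (descPochhammer ℤ (k + 1 + j)).eval (p + k)
      = p * ((descPochhammer ℤ k).eval (p + k) * (descPochhammer ℤ j).eval (p - 1)) := by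
    rw [← descPochhammer_mul, eval_mul, eval_comp, descPochhammer_succ_eval]
    simp only [eval_sub, eval_X, eval_natCast]
    push_cast
    ring_nf
  have hk : (descPochhammer ℤ k).eval (p + k) ≡ k ! [ZMOD p] := by
    have h := (Int.modEq_iff_dvd.mpr
      (by simpa using sub_dvd_eval_sub (p + k) (k : ℤ) (descPochhammer ℤ k))).symm
    rwa [descPochhammer_eval_eq_descFactorial, descFactorial_self] at h
  have hj : (descPochhammer ℤ j).eval (p - 1) ≡ (-1) ^ j * j ! [ZMOD p] := by
    have h := (Int.modEq_iff_dvd.mpr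
      (by simpa using sub_dvd_eval_sub (p - 1) (-1) (descPochhammer ℤ j))).symm
    have hneg := ascPochhammer_eval_neg_eq_descPochhammer ℤ (-1) j
    rw [neg_neg, ascPochhammer_eval_one] at hneg
    rwa [hneg, ← mul_assoc, ← mul_pow, neg_one_mul, neg_neg, one_pow, one_mul]
  rw [hsplit, sq]
  exact (hk.mul hj).mul_left'

theorem sum_choose_mul_choose_mul_descFactorial_modEq (p a b : ℕ) :
    (∑ k ∈ range (a + 1), a.choose k * b.choose k * (p + k).descFactorial (a + b + 1) : ℤ) ≡
      a ! * b ! * ((-1) ^ (a + b) * p) [ZMOD p ^ 2] := calc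
  _ ≡ ∑ k ∈ range (a + 1), a.choose k * b.choose k *
        (p * (k ! * ((-1) ^ (a + b - k) * (a + b - k)!))) [ZMOD p ^ 2] :=
    Int.ModEq.sum fun k hk ↦ by
      rw [← descPochhammer_eval_eq_descFactorial, Nat.cast_add]
      exact (descPochhammer_eval_add_modEq p (by rw [mem_range] at hk; omega)).mul_left _
  _ = a ! * b ! * ((-1) ^ (a + b) * p) *
        ∑ k ∈ range (a + 1), (-1 : ℤ) ^ k * a.choose k * (a + b - k).choose a := by
    rw [mul_sum]
    refine sum_congr rfl fun k hk ↦ ?_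
    have hka : k ≤ a := by rw [mem_range] at hk; omega
    have hfact : (b.choose k * k ! * (a + b - k)! : ℤ) = a ! * b ! * (a + b - k).choose a := by
      exact_mod_cast choose_mul_factorial_mul_factorial_add_sub hka
    rw [neg_one_pow_sub_of_le (by omega)]
    linear_combination (p * (-1) ^ (a + b) * (-1) ^ k * a.choose k : ℤ) * hfact
  _ = a ! * b ! * ((-1) ^ (a + b) * p) := by
    rw [alternating_sum_choose_mul_choose_add_sub, mul_one]

/-- for a prime `p > max{a,b}`,
`((a+b+1)!/(a!b!)) ∑_{h<p} C(h,a) C(h,b) ≡ (-1)^{a-b} p (mod p^2)`. -/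
theorem stmt7 (a b p : ℕ) (hp : p.Prime) (ha : a < p) (hb : b < p) :
    (((a + b + 1).factorial / (a.factorial * b.factorial) : ℕ) *
        ∑ h ∈ Finset.range p, (h.choose a * h.choose b : ℤ)) ≡
      (-1) ^ (a + b) * p [ZMOD (p : ℤ) ^ 2] := by
  have hM : a ! * b ! * ((a + b + 1)! / (a ! * b !)) = (a + b + 1)! :=
    Nat.mul_div_cancel' ((factorial_mul_factorial_dvd_factorial_add a b).trans
      (factorial_dvd_factorial (le_succ _)))
  have hcong : (a ! * b ! : ℤ) * (((a + b + 1)! / (a ! * b !) : ℕ) *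
        ∑ h ∈ range p, (h.choose a * h.choose b : ℤ)) ≡
      a ! * b ! * ((-1) ^ (a + b) * p) [ZMOD p ^ 2] := by
    have h := sum_choose_mul_choose_mul_descFactorial_modEq p a b
    have hsum := congrArg (Nat.cast : ℕ → ℤ) (factorial_mul_sum_range_choose_mul_choose p a b)
    push_cast at hsum
    rw [← hsum, ← hM] at h
    push_cast at h
    rwa [← mul_assoc]
  have hcop : IsCoprime ((p : ℤ) ^ 2) (a ! * b ! : ℤ) := by
    exact_mod_cast isCoprime_iff_coprime.mpr
      (((hp.coprime_factorial_of_lt ha).mul_right (hp.coprime_factorial_of_lt hb)).pow_left 2)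
  rw [Int.modEq_iff_dvd, ← mul_sub] at hcong
  exact Int.modEq_iff_dvd.mpr (hcop.dvd_of_dvd_mul_left hcong)
end

section
/- For positive integers m and n, the integer (2m+2)! · ∑_{h=0}^{n-1} h^{2m+1} is divisible by n^2. -/
open Polynomial Finset

/-! Write `S_k(n) = ∑_{h<n} h^k`. Telescoping `(h+1)^{k+1} - h^{k+1}` gives
`n^{k+1} = ∑_{j≤k} C(k+1,j) S_j(n)`, and strong induction on `k` then shows `n ∣ (k+1)! S_k(n)`.
For the odd exponent `2m+1`, pairing `h` with `n - h` and expanding `(n - h)^{2m+1}` to first order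
in `n` gives `2 S_{2m+1}(n) ≡ (2m+1) n S_{2m}(n) (mod n^2)` once `m ≥ 1`. Since `(2m+2)! = 2(m+1)(2m+1)!`,
`(2m+2)! S_{2m+1}(n) ≡ (m+1)(2m+1) n · (2m+1)! S_{2m}(n) (mod n^2)`, and the right side is divisible
by `n · n`. -/

section PowerSum

open Nat

def powerSum (k n : ℕ) : ℤ := ∑ h ∈ range n, (h : ℤ) ^ k

theorem pow_succ_eq_sum_choose_mul_powerSum (k n : ℕ) :
    (n : ℤ) ^ (k + 1) = ∑ j ∈ range (k + 1), ((k + 1).choose j : ℤ) * powerSum j n := by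
  have step (h : ℕ) : ((h + 1 : ℕ) : ℤ) ^ (k + 1) - (h : ℤ) ^ (k + 1) =
      ∑ j ∈ range (k + 1), ((k + 1).choose j : ℤ) * (h : ℤ) ^ j := by
    rw [Nat.cast_succ, add_pow, sum_range_succ, Nat.choose_self]
    simp only [one_pow, mul_one, Nat.cast_one, add_sub_cancel_right]
    exact sum_congr rfl fun j _ => mul_comm _ _
  simp only [powerSum, mul_sum]
  rw [sum_comm, ← sum_congr rfl fun h _ => step h,
    sum_range_sub (fun h : ℕ => (h : ℤ) ^ (k + 1))]
  simp

theorem dvd_factorial_mul_powerSum (k n : ℕ) : (n : ℤ) ∣ (k + 1)! * powerSum k n := by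
  induction k using Nat.strong_induction_on with
  | _ k ih =>
  have hrec : ((k + 1)! : ℤ) * powerSum k n = k ! * (n : ℤ) ^ (k + 1) -
      ∑ j ∈ range k, ((k + 1).choose j : ℤ) * (k ! * powerSum j n) := by
    rw [pow_succ_eq_sum_choose_mul_powerSum, sum_range_succ, Nat.choose_succ_self_right,
      Nat.factorial_succ, mul_add, mul_sum]
    simp only [mul_left_comm ((k ! : ℕ) : ℤ)]
    push_cast
    ring
  rw [hrec]
  refine dvd_sub (dvd_mul_of_dvd_right (dvd_pow_self _ k.succ_ne_zero) _)
    (dvd_sum fun j hj => dvd_mul_of_dvd_right ?_ _)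
  have hjk : (j + 1)! ∣ k ! := Nat.factorial_dvd_factorial (mem_range.mp hj)
  exact (ih j (mem_range.mp hj)).trans (mul_dvd_mul_right (Int.natCast_dvd_natCast.mpr hjk) _)

theorem sum_range_natCast_sub_pow {p : ℕ} (hp : p ≠ 0) (n : ℕ) :
    ∑ h ∈ range n, ((n : ℤ) - h) ^ p = powerSum p n + (n : ℤ) ^ p := by
  have hreflect := sum_range_reflect (fun h : ℕ => ((h + 1 : ℕ) : ℤ) ^ p) n
  rw [powerSum, ← sum_range_succ, sum_range_succ', ← hreflect]
  simp only [Nat.cast_zero, zero_pow hp, add_zero]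
  refine sum_congr rfl fun h hh => ?_
  rw [show n - 1 - h + 1 = n - h by have := mem_range.mp hh; omega,
    Nat.cast_sub (mem_range.mp hh).le]

theorem sub_pow_odd_modEq (x y : ℤ) (m : ℕ) :
    (x - y) ^ (2 * m + 1) ≡ -y ^ (2 * m + 1) + (2 * m + 1) * x * y ^ (2 * m) [ZMOD x ^ 2] := by
  obtain ⟨c, hc⟩ := sq_dvd_add_pow_sub_sub x (-y) (2 * m + 1)
  rw [Nat.add_sub_cancel, Even.neg_pow ⟨m, by ring⟩, Odd.neg_pow ⟨m, rfl⟩] at hc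
  refine (Int.modEq_iff_dvd.mpr ⟨c, ?_⟩).symm
  push_cast at hc
  linear_combination hc

theorem two_mul_powerSum_odd_modEq {m : ℕ} (hm : 1 ≤ m) (n : ℕ) :
    2 * powerSum (2 * m + 1) n ≡ (2 * m + 1) * n * powerSum (2 * m) n [ZMOD (n : ℤ) ^ 2] := by
  have hpair : powerSum (2 * m + 1) n + (n : ℤ) ^ (2 * m + 1) ≡
      -powerSum (2 * m + 1) n + (2 * m + 1) * n * powerSum (2 * m) n [ZMOD (n : ℤ) ^ 2] := by
    rw [← sum_range_natCast_sub_pow (by omega), powerSum, powerSum, mul_sum, ← sum_neg_distrib,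
      ← sum_add_distrib]
    exact Int.ModEq.sum fun h _ => sub_pow_odd_modEq n h m
  have hsmall : (n : ℤ) ^ (2 * m + 1) ≡ 0 [ZMOD (n : ℤ) ^ 2] :=
    Int.modEq_zero_iff_dvd.mpr (pow_dvd_pow _ (by omega))
  calc 2 * powerSum (2 * m + 1) n
      = (powerSum (2 * m + 1) n + (n : ℤ) ^ (2 * m + 1)) + powerSum (2 * m + 1) n
        - (n : ℤ) ^ (2 * m + 1) := by ring
    _ ≡ (-powerSum (2 * m + 1) n + (2 * m + 1) * n * powerSum (2 * m) n) + powerSum (2 * m + 1) n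
        - 0 [ZMOD (n : ℤ) ^ 2] := (hpair.add_right _).sub hsmall
    _ = (2 * m + 1) * n * powerSum (2 * m) n := by ring

end PowerSum

theorem stmt17_general (m n : ℕ) (hm : 1 ≤ m) :
    n ^ 2 ∣ (2 * m + 2).factorial * ∑ h ∈ Finset.range n, h ^ (2 * m + 1) := by
  have hfactorial : (2 * m + 2).factorial = (m + 1) * (2 * m + 1).factorial * 2 := by
    rw [Nat.factorial_succ]; ring
  rw [← Int.natCast_dvd_natCast, hfactorial]
  push_cast
  change _ ∣ _ * powerSum (2 * m + 1) n
  rw [← Int.modEq_zero_iff_dvd]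
  have hn_dvd := dvd_factorial_mul_powerSum (2 * m) n
  calc ((m + 1) * (2 * m + 1).factorial * 2 : ℤ) * powerSum (2 * m + 1) n
      = (m + 1) * (2 * m + 1).factorial * (2 * powerSum (2 * m + 1) n) := by ring
    _ ≡ (m + 1) * (2 * m + 1).factorial * ((2 * m + 1) * n * powerSum (2 * m) n)
        [ZMOD (n : ℤ) ^ 2] := (two_mul_powerSum_odd_modEq hm n).mul_left _
    _ = (m + 1) * (2 * m + 1) * (n * ((2 * m + 1).factorial * powerSum (2 * m) n)) := by ring
    _ ≡ 0 [ZMOD (n : ℤ) ^ 2] :=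
      Int.modEq_zero_iff_dvd.mpr (dvd_mul_of_dvd_right (sq (n : ℤ) ▸ mul_dvd_mul_left _ hn_dvd) _)

/-- `n^2` divides `(2m+2)! ∑_{h<n} h^{2m+1}`. -/
theorem stmt17 (m n : ℕ) (hm : 1 ≤ m) (hn : 1 ≤ n) :
    n ^ 2 ∣ (2 * m + 2).factorial * ∑ h ∈ Finset.range n, h ^ (2 * m + 1) :=
  stmt17_general m n hm
end

section
/- For any prime p and nonnegative integer a < p, the integer (a+1) · C(p, a+1) is congruent to 0 modulo p, and moreover ((2a+1)!/(a!a!)) · ∑_{h=0}^{p-1} C(h,a)^2 ≡ p (mod p^2). -/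
open Polynomial Finset

lemma vander (m n r : ℕ) : (m + n).choose r = ∑ j ∈ range (r+1), m.choose j * n.choose (r - j) := by
  rw [Nat.add_choose_eq, Finset.Nat.sum_antidiagonal_eq_sum_range_succ_mk]

lemma s19_inner (a j : ℕ) (hj : j ≤ a) :
    ∑ k ∈ range (a+1), a.choose k ^ 2 * k.choose j
      = a.choose j * (2*a - j).choose (a - j) := by
  have h1 : ∑ k ∈ range (a+1), a.choose k ^ 2 * k.choose j
      = ∑ k ∈ Ico j (a+1), a.choose k ^ 2 * k.choose j := by
    refine (Finset.sum_subset ?_ ?_).symm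
    · intro x hx; simp only [mem_Ico, mem_range] at hx ⊢; omega
    · intro k hk hk2
      simp only [mem_range, mem_Ico, not_and, not_le, not_lt] at hk hk2
      rw [Nat.choose_eq_zero_of_lt (show k < j by omega), mul_zero]
  rw [h1, Finset.sum_Ico_eq_sum_range]
  have h2 : ∀ m ∈ range (a + 1 - j), a.choose (j + m) ^ 2 * (j + m).choose j
      = a.choose j * ((a - j).choose m * a.choose ((a-j) - m)) := by
    intro m hm
    simp only [mem_range] at hm
    have hjm : j + m ≤ a := by omega
    have e1 : a.choose (j+m) * (j+m).choose j = a.choose j * (a-j).choose m := by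
      have := Nat.choose_mul (n := a) (Nat.le_add_right j m)
      simpa using this
    have e2 : a.choose (j+m) = a.choose ((a-j)-m) := by
      rw [← Nat.choose_symm hjm]; congr 1; omega
    calc a.choose (j+m)^2 * (j+m).choose j
        = (a.choose (j+m) * (j+m).choose j) * a.choose (j+m) := by ring
      _ = (a.choose j * (a-j).choose m) * a.choose ((a-j)-m) := by rw [e1, ← e2]
      _ = a.choose j * ((a - j).choose m * a.choose ((a-j) - m)) := by ring
  rw [Finset.sum_congr rfl h2, ← Finset.mul_sum]
  congr 1
  have h3 : a + 1 - j = (a - j) + 1 := by omega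
  rw [h3, ← vander]
  congr 1
  omega




lemma s19_keyI (a n : ℕ) :
    n.choose a ^ 2 = ∑ k ∈ range (a+1), a.choose k ^ 2 * (n + k).choose (2*a) := by
  rcases lt_or_ge n a with hn | hn
  · rw [Nat.choose_eq_zero_of_lt hn]
    rw [eq_comm, pow_two, zero_mul]
    refine Finset.sum_eq_zero fun k hk => ?_
    simp only [mem_range] at hk
    rw [Nat.choose_eq_zero_of_lt (show n + k < 2*a by omega), mul_zero]
  · have step1 : ∀ k ∈ range (a+1), a.choose k ^ 2 * (n + k).choose (2*a)
        = ∑ j ∈ range (2*a+1), a.choose k ^ 2 * (k.choose j * n.choose (2*a - j)) := by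
      intro k hk
      rw [add_comm n k, vander, Finset.mul_sum]
    rw [Finset.sum_congr rfl step1, Finset.sum_comm]
    have step2 : ∀ j ∈ range (2*a+1), ∑ k ∈ range (a+1), a.choose k ^ 2 * (k.choose j * n.choose (2*a - j))
        = (∑ k ∈ range (a+1), a.choose k ^ 2 * k.choose j) * n.choose (2*a-j) := by
      intro j hj
      rw [Finset.sum_mul]
      exact Finset.sum_congr rfl fun k _ => by ring
    rw [Finset.sum_congr rfl step2]
    have step3 : ∑ j ∈ range (2*a+1), (∑ k ∈ range (a+1), a.choose k ^ 2 * k.choose j) * n.choose (2*a-j)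
        = ∑ j ∈ range (a+1), (∑ k ∈ range (a+1), a.choose k ^ 2 * k.choose j) * n.choose (2*a-j) := by
      refine (Finset.sum_subset ?_ ?_).symm
      · intro x hx; simp only [mem_range] at hx ⊢; omega
      · intro j hj hj2
        simp only [mem_range, not_lt] at hj hj2
        have : ∑ k ∈ range (a+1), a.choose k ^ 2 * k.choose j = 0 := by
          refine Finset.sum_eq_zero fun k hk => ?_
          simp only [mem_range] at hk
          rw [Nat.choose_eq_zero_of_lt (show k < j by omega), mul_zero]
        rw [this, zero_mul]
    rw [step3]
    have step4 : ∀ j ∈ range (a+1), (∑ k ∈ range (a+1), a.choose k ^ 2 * k.choose j) * n.choose (2*a-j)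
        = a.choose j * ((n-a).choose (a-j) * n.choose a) := by
      intro j hj
      simp only [mem_range] at hj
      have hja : j ≤ a := by omega
      rw [s19_inner a j hja]
      have e1 : (2*a-j).choose (a-j) = (2*a-j).choose a := by
        rw [← Nat.choose_symm (show a - j ≤ 2*a - j by omega)]
        congr 1; omega
      rw [e1]
      have e2 : (2*a-j).choose a * n.choose (2*a-j) = n.choose a * (n-a).choose (a-j) := by
        rcases le_or_gt (2*a - j) n with h | h
        · have := Nat.choose_mul (n := n) (show a ≤ 2*a - j by omega)
          rw [mul_comm ((2 * a - j).choose a), this]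
          have e3 : 2*a - j - a = a - j := by omega
          rw [e3]
        · rw [Nat.choose_eq_zero_of_lt h, Nat.choose_eq_zero_of_lt (show n - a < a - j by omega)]
          simp
      calc a.choose j * (2*a-j).choose a * n.choose (2*a-j)
          = a.choose j * ((2*a-j).choose a * n.choose (2*a-j)) := by ring
        _ = a.choose j * (n.choose a * (n-a).choose (a-j)) := by rw [e2]
        _ = a.choose j * ((n-a).choose (a-j) * n.choose a) := by ring
    rw [Finset.sum_congr rfl step4]
    have step5 : ∑ j ∈ range (a+1), a.choose j * ((n-a).choose (a-j) * n.choose a)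
        = (∑ j ∈ range (a+1), a.choose j * (n-a).choose (a-j)) * n.choose a := by
      rw [Finset.sum_mul]; exact Finset.sum_congr rfl fun j _ => by ring
    rw [step5, ← vander]
    have : a + (n - a) = n := by omega
    rw [this, pow_two]


lemma s19_hockey (p a k : ℕ) (hp : 0 < p) (hk : k ≤ a) :
    ∑ h ∈ range p, (h + k).choose (2*a) = (p + k).choose (2*a+1) := by
  have h1 : ∑ h ∈ range p, (h + k).choose (2*a) = ∑ m ∈ Ico k (p+k), m.choose (2*a) := by
    rw [Finset.sum_Ico_eq_sum_range]
    have : p + k - k = p := by omega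
    rw [this]
    exact Finset.sum_congr rfl fun i _ => by rw [add_comm]
  rw [h1]
  have h2 : ∑ m ∈ Ico k (p+k), m.choose (2*a) = ∑ m ∈ range (p+k), m.choose (2*a) := by
    refine Finset.sum_subset ?_ ?_
    · intro x hx; simp only [mem_Ico, mem_range] at hx ⊢; omega
    · intro m hm hm2
      simp only [mem_range, mem_Ico, not_and, not_le] at hm hm2
      exact Nat.choose_eq_zero_of_lt (by omega)
  rw [h2]
  have h3 : ∑ m ∈ range (p+k), m.choose (2*a) = ∑ m ∈ Icc (2*a) (p+k-1), m.choose (2*a) := by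
    refine (Finset.sum_subset ?_ ?_).symm
    · intro x hx; simp only [mem_Icc, mem_range] at hx ⊢; omega
    · intro m hm hm2
      simp only [mem_range, mem_Icc, not_and, not_le] at hm hm2
      exact Nat.choose_eq_zero_of_lt (by omega)
  rw [h3, Nat.sum_Icc_choose]
  congr 1
  omega

lemma s19_alt (a : ℕ) :
    ∑ k ∈ range (a+1), (-1:ℤ)^k * a.choose k * (2*a - k).choose a = 1 := by
  have key : (X:ℤ[X])^a * (X+1)^a
      = ∑ k ∈ range (a+1), Polynomial.C ((-1:ℤ)^(k+a) * a.choose k) * (X+1)^(a+k) := by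
    have hs : (X:ℤ[X])^a = ((X+1) - 1)^a := by ring_nf
    rw [hs, sub_pow, Finset.sum_mul]
    refine Finset.sum_congr rfl fun k hk => ?_
    rw [Polynomial.C_mul, Polynomial.C_pow, pow_add (X+1:ℤ[X])]
    have h1 : ((a.choose k : ℤ[X])) = Polynomial.C ((a.choose k : ℤ)) := (Polynomial.C_eq_natCast _).symm
    have h2 : ((-1 : ℤ[X])) = Polynomial.C ((-1 : ℤ)) := by simp
    rw [h1, h2, one_pow]
    ring
  have l1 : ((X:ℤ[X])^a * (X+1)^a).coeff a = 1 := by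
    have := Polynomial.coeff_X_pow_mul ((X+1:ℤ[X])^a) a 0
    rw [zero_add] at this
    rw [this, Polynomial.coeff_X_add_one_pow]
    simp
  have l2 : ((X:ℤ[X])^a * (X+1)^a).coeff a
      = ∑ k ∈ range (a+1), (-1:ℤ)^(k+a) * a.choose k * (a+k).choose a := by
    rw [key, Polynomial.finset_sum_coeff]
    refine Finset.sum_congr rfl fun k hk => ?_
    rw [Polynomial.coeff_C_mul, Polynomial.coeff_X_add_one_pow]
  have l3 : ∑ k ∈ range (a+1), (-1:ℤ)^(k+a) * a.choose k * (a+k).choose a = 1 := by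
    rw [← l2, l1]
  have l4 := Finset.sum_range_reflect (fun k => (-1:ℤ)^(k+a) * (a.choose k) * ((a+k).choose a)) (a+1)
  have l5 : ∑ k ∈ range (a+1), (-1:ℤ)^k * a.choose k * (2*a - k).choose a
      = ∑ j ∈ range (a+1), (fun k => (-1:ℤ)^(k+a) * (a.choose k) * ((a+k).choose a)) (a + 1 - 1 - j) := by
    refine Finset.sum_congr rfl fun k hk => ?_
    simp only [mem_range] at hk
    have hka : k ≤ a := by omega
    simp only []
    have r1 : a + 1 - 1 - k = a - k := by omega
    rw [r1]
    have r2 : (-1:ℤ)^(a - k + a) = (-1:ℤ)^k := by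
      have : a - k + a = 2*(a-k) + k := by omega
      rw [this, pow_add, pow_mul]
      simp
    have r3 : a.choose (a - k) = a.choose k := Nat.choose_symm hka
    have r4 : a + (a - k) = 2*a - k := by omega
    rw [r2, r3, r4]
  exact (l5.trans l4).trans l3


lemma s19_term (p a k : ℕ) (hp : p.Prime) (ha : a < p) (hk : k ≤ a) :
    ((p:ℤ))^2 ∣ ((a.choose k : ℤ))^2 * ((2*a+1) * ((2*a).choose a) : ℕ) * ((p+k).choose (2*a+1) : ℕ)
      - (p:ℤ) * (-1)^k * (a.choose k) * ((2*a - k).choose a) := by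
  rcases lt_or_ge (p+k) (2*a+1) with hdeg | hlt
  · -- degenerate case
    rw [Nat.choose_eq_zero_of_lt hdeg]
    have hd : p ∣ (2*a - k).choose a := hp.dvd_choose ha (by omega) (by omega)
    obtain ⟨c, hc⟩ := hd
    rw [hc]
    refine ⟨-((-1)^k * (a.choose k) * c), ?_⟩
    push_cast
    ring
  · -- main case
    have e1 : a.choose k * (k.factorial * (a-k).factorial) = a.factorial := by
      have := Nat.choose_mul_factorial_mul_factorial hk
      rw [← this]; ring
    have e2 : (2*a).choose a * (a.factorial * a.factorial) = (2*a).factorial := by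
      have h := Nat.choose_mul_factorial_mul_factorial (show a ≤ 2*a by omega)
      have h2 : 2*a - a = a := by omega
      rw [h2] at h
      rw [← h]; ring
    have e5 : (2*a - k).choose a * (a.factorial * (a-k).factorial) = (2*a-k).factorial := by
      have h := Nat.choose_mul_factorial_mul_factorial (show a ≤ 2*a - k by omega)
      have h2 : 2*a - k - a = a - k := by omega
      rw [h2] at h
      rw [← h]; ring
    have c1 : (k.factorial * (a-k).factorial)^2 * (a.choose k ^ 2 * ((2*a+1) * (2*a).choose a * (p+k).choose (2*a+1)))
        = (p+k).descFactorial (2*a+1) := by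
      rw [Nat.descFactorial_eq_factorial_mul_choose, Nat.factorial_succ, ← e2, ← e1]
      ring
    have c6 : (k.factorial * (a-k).factorial)^2 * (a.choose k * (2*a-k).choose a)
        = k.factorial * (2*a-k).factorial := by
      rw [← e5, ← e1]; ring
    have c2 : ((p+k).descFactorial (2*a+1) : ℤ) = ∏ i ∈ range (2*a+1), ((p:ℤ) + k - i) := by
      rw [Nat.descFactorial_eq_prod_range, Nat.cast_prod]
      refine Finset.prod_congr rfl fun i hi => ?_
      simp only [mem_range] at hi
      have : i ≤ p + k := by omega
      push_cast [Nat.cast_sub this]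
      ring
    have hkmem : k ∈ range (2*a+1) := by simp; omega
    have c3 : ∏ i ∈ range (2*a+1), ((p:ℤ) + k - i)
        = (p:ℤ) * ∏ i ∈ (range (2*a+1)).erase k, ((p:ℤ) + k - i) := by
      have := (Finset.mul_prod_erase (range (2*a+1)) (fun i => (p:ℤ)+k-i) hkmem).symm
      simpa using this
    have c4 : (p:ℤ) ∣ (∏ i ∈ (range (2*a+1)).erase k, ((p:ℤ) + k - i))
        - (∏ i ∈ (range (2*a+1)).erase k, ((k:ℤ) - i)) := by
      have hz : ((((∏ i ∈ (range (2*a+1)).erase k, ((p:ℤ) + k - i))) : ℤ) : ZMod p)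
          = (((∏ i ∈ (range (2*a+1)).erase k, ((k:ℤ) - i)) : ℤ) : ZMod p) := by
        push_cast
        refine Finset.prod_congr rfl fun i _ => ?_
        simp [ZMod.natCast_self]
      exact ((ZMod.intCast_eq_intCast_iff _ _ _).mp hz.symm).dvd
    have c5 : (∏ i ∈ (range (2*a+1)).erase k, ((k:ℤ) - i))
        = (-1)^k * k.factorial * (2*a-k).factorial := by
      have hsplit : (range (2*a+1)).erase k = range k ∪ Ico (k+1) (2*a+1) := by
        ext x
        simp only [mem_erase, mem_union, mem_range, mem_Ico]
        omega
      have hdisj : Disjoint (range k) (Ico (k+1) (2*a+1)) := by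
        rw [Finset.disjoint_left]
        intro x hx hx2
        simp only [mem_range, mem_Ico] at hx hx2
        omega
      rw [hsplit, Finset.prod_union hdisj]
      have P1 : ∏ i ∈ range k, ((k:ℤ) - i) = k.factorial := by
        have h1 : ∀ i ∈ range k, ((k:ℤ) - i) = ((k - i : ℕ) : ℤ) := by
          intro i hi
          simp only [mem_range] at hi
          push_cast [Nat.cast_sub (le_of_lt hi)]
          ring
        rw [Finset.prod_congr rfl h1, ← Nat.cast_prod]
        congr 1
        have h2 := Finset.prod_range_reflect (fun i => i + 1) k
        rw [Finset.prod_range_add_one_eq_factorial] at h2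
        rw [← h2]
        refine Finset.prod_congr rfl fun i hi => ?_
        simp only [mem_range] at hi
        omega
      have P2 : ∏ i ∈ Ico (k+1) (2*a+1), ((k:ℤ) - i) = (-1)^k * (2*a-k).factorial := by
        rw [Finset.prod_Ico_eq_prod_range]
        have hcard : 2*a+1 - (k+1) = 2*a - k := by omega
        rw [hcard]
        have h3 : ∀ j ∈ range (2*a-k), ((k:ℤ) - ((k+1+j : ℕ) : ℤ)) = (-1) * ((j+1 : ℕ) : ℤ) := by
          intro j hj
          push_cast
          ring
        rw [Finset.prod_congr rfl h3, Finset.prod_mul_distrib, Finset.prod_const, ← Nat.cast_prod,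
          Finset.prod_range_add_one_eq_factorial, Finset.card_range]
        have h4 : (-1:ℤ)^(2*a-k) = (-1)^k := by
          have h5 : 2*a-k = 2*(a-k)+k := by omega
          rw [h5, pow_add, pow_mul]
          simp
        rw [h4]
      rw [P1, P2]
      ring
    -- assemble
    set T : ℤ := ((a.choose k : ℤ))^2 * ((2*a+1) * ((2*a).choose a) : ℕ) * ((p+k).choose (2*a+1) : ℕ) with hT
    set R : ℤ := (p:ℤ) * (-1)^k * (a.choose k) * ((2*a - k).choose a) with hR
    set D : ℤ := ((k.factorial * (a-k).factorial : ℕ) : ℤ)^2 with hD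
    have t1 : D * T = (p:ℤ) * ∏ i ∈ (range (2*a+1)).erase k, ((p:ℤ) + k - i) := by
      rw [← c3, ← c2]
      have := congrArg (Nat.cast : ℕ → ℤ) c1
      push_cast at this ⊢
      rw [hD, hT]
      push_cast
      linear_combination this
    have t2 : D * R = (p:ℤ) * ∏ i ∈ (range (2*a+1)).erase k, ((k:ℤ) - i) := by
      rw [c5]
      have := congrArg (Nat.cast : ℕ → ℤ) c6
      push_cast at this ⊢
      rw [hD, hR]
      push_cast
      linear_combination (p:ℤ) * (-1:ℤ)^k * this
    obtain ⟨u, hu⟩ := c4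
    have main : D * (T - R) = (p:ℤ)^2 * u := by
      rw [mul_sub, t1, t2, ← mul_sub, hu]
      ring
    -- coprimality
    have hnd1 : ¬ p ∣ k.factorial := fun h => by
      have := (Nat.Prime.dvd_factorial hp).mp h
      omega
    have hnd2 : ¬ p ∣ (a-k).factorial := fun h => by
      have := (Nat.Prime.dvd_factorial hp).mp h
      omega
    have hbase : Nat.Coprime p (k.factorial * (a-k).factorial) :=
      Nat.Coprime.mul_right (hp.coprime_iff_not_dvd.mpr hnd1) (hp.coprime_iff_not_dvd.mpr hnd2)
    have hcop : Nat.Coprime (p^2) ((k.factorial * (a-k).factorial)^2) := Nat.Coprime.pow 2 2 hbase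
    have h2 : ((p^2 : ℕ) : ℤ) ∣ D * (T - R) := by
      rw [main]
      exact ⟨u, by push_cast; ring⟩
    rw [Int.natCast_dvd] at h2
    rw [Int.natAbs_mul] at h2
    have hDabs : D.natAbs = (k.factorial * (a-k).factorial)^2 := by
      rw [hD]
      rw [Int.natAbs_pow]
      simp [Int.natAbs_mul]
    rw [hDabs] at h2
    have h3 : p^2 ∣ (T - R).natAbs := hcop.dvd_of_dvd_mul_left h2
    have h4 : ((p^2 : ℕ) : ℤ) ∣ T - R := Int.natCast_dvd.mpr h3
    push_cast at h4
    exact h4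

/-- for a prime `p` and `a < p`, `p ∣ (a+1) C(p, a+1)` and
`((2a+1)!/(a!a!)) ∑_{h<p} C(h,a)^2 ≡ p (mod p^2)`. -/
theorem stmt19 (p a : ℕ) (hp : p.Prime) (ha : a < p) :
    (p : ℤ) ∣ (a + 1) * (p.choose (a + 1) : ℤ) ∧
      (((2 * a + 1).factorial / (a.factorial * a.factorial) : ℕ) *
          ∑ h ∈ Finset.range p, (h.choose a : ℤ) ^ 2) ≡ (p : ℤ) [ZMOD (p : ℤ) ^ 2] := by
  constructor
  · rcases eq_or_lt_of_le (Nat.succ_le_of_lt ha) with h | h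
    · have hc : p.choose (a+1) = 1 := by rw [← h, Nat.choose_self]
      rw [hc]
      have hap : ((a:ℤ)+1) = (p:ℤ) := by exact_mod_cast congrArg (Nat.cast (R := ℤ)) h
      rw [Nat.cast_one, mul_one, hap]
    · have hd : p ∣ p.choose (a+1) := hp.dvd_choose_self (Nat.succ_ne_zero a) h
      have : (p:ℤ) ∣ (p.choose (a+1) : ℤ) := Int.natCast_dvd_natCast.mpr hd
      exact this.mul_left _
  · set N : ℕ := (2*a+1) * ((2*a).choose a) with hN
    have e2 : (2*a).choose a * (a.factorial * a.factorial) = (2*a).factorial := by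
      have h := Nat.choose_mul_factorial_mul_factorial (show a ≤ 2*a by omega)
      have h2 : 2*a - a = a := by omega
      rw [h2] at h
      rw [← h]; ring
    have hNdiv : (2*a+1).factorial / (a.factorial * a.factorial) = N := by
      have hfac : (2*a+1).factorial = N * (a.factorial * a.factorial) := by
        rw [Nat.factorial_succ, ← e2, hN]; ring
      rw [hfac, Nat.mul_div_cancel]
      positivity
    rw [hNdiv]
    have hsum : N * ∑ h ∈ range p, (h.choose a)^2
        = ∑ k ∈ range (a+1), a.choose k ^ 2 * N * ((p+k).choose (2*a+1)) := by
      calc N * ∑ h ∈ range p, (h.choose a)^2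
          = N * ∑ h ∈ range p, ∑ k ∈ range (a+1), a.choose k ^ 2 * (h + k).choose (2*a) := by
            rw [Finset.sum_congr rfl fun h _ => s19_keyI a h]
        _ = N * ∑ k ∈ range (a+1), a.choose k ^ 2 * ∑ h ∈ range p, (h + k).choose (2*a) := by
            rw [Finset.sum_comm]
            congr 1
            exact Finset.sum_congr rfl fun k _ => (Finset.mul_sum _ _ _).symm
        _ = ∑ k ∈ range (a+1), a.choose k ^ 2 * N * ((p+k).choose (2*a+1)) := by
            rw [Finset.mul_sum]
            refine Finset.sum_congr rfl fun k hk => ?_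
            simp only [mem_range] at hk
            rw [s19_hockey p a k hp.pos (by omega)]
            ring
    have cast1 : ((N:ℤ) * ∑ h ∈ range p, (h.choose a:ℤ)^2)
        = ∑ k ∈ range (a+1), ((a.choose k:ℤ))^2 * (N:ℤ) * (((p+k).choose (2*a+1) : ℕ) : ℤ) := by
      exact_mod_cast hsum
    have big : ((p:ℤ))^2 ∣ ((N:ℤ) * ∑ h ∈ range p, (h.choose a:ℤ)^2) - (p:ℤ) := by
      rw [cast1]
      have halt : (p:ℤ) = ∑ k ∈ range (a+1), (p:ℤ) * ((-1:ℤ)^k * a.choose k * (2*a - k).choose a) := by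
        rw [← Finset.mul_sum, s19_alt a, mul_one]
      nth_rewrite 2 [halt]
      rw [← Finset.sum_sub_distrib]
      refine Finset.dvd_sum fun k hk => ?_
      simp only [mem_range] at hk
      have ht := s19_term p a k hp ha (by omega)
      have goal_eq : ((a.choose k:ℤ))^2 * (N:ℤ) * (((p+k).choose (2*a+1) : ℕ) : ℤ)
            - (p:ℤ) * ((-1:ℤ)^k * a.choose k * (2*a - k).choose a)
          = ((a.choose k : ℤ))^2 * ((2*a+1) * ((2*a).choose a) : ℕ) * ((p+k).choose (2*a+1) : ℕ)
            - (p:ℤ) * (-1)^k * (a.choose k) * ((2*a - k).choose a) := by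
        rw [hN]; push_cast; ring
      rw [goal_eq]
      exact ht
    exact Int.ModEq.symm (Int.modEq_iff_dvd.mpr big)
end
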